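/- Let γ ⊂ ℂ be a Jordan curve and 0 < θ < π. A point (z,w) ∈ (γ×γ) ∩ R_θ(γ×γ) with z ≠ w exists if and only if there is a rectangle inscribed in γ whose diagonals meet at angle θ and one of whose diagonals has endpoints z and w; explicitly, (z,w) ∈ (γ×γ) ∩ R_θ(γ×γ) \ Δ(γ) implies the four points z, w, and the two coordinates of R_{−θ}(z,w) form the vertices of a rectangle inscribed in γ with diagonal angle θ. -/

import Mathlib

/-
R_θ fixes the midpoint (z+w)/2 and multiplies the half-difference (z-w)/2 by e^{iθ}. Hence
R_θ(a, c) = (b, d) says exactly that the segments ac and bd share their midpoint and that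
d - b is c - a turned through θ, i.e. that a, b, c, d is a θ-rectangle; and R_{-θ} inverts R_θ.
-/

open Complex

/-- The rotation of ℂ² through angle θ about the diagonal complex line Δ(ℂ). -/
noncomputable def Rrot (θ : ℝ) (p : ℂ × ℂ) : ℂ × ℂ :=
  ((p.1 + p.2) / 2 + Complex.exp ((θ : ℂ) * I) * (p.1 - p.2) / 2,
   (p.1 + p.2) / 2 - Complex.exp ((θ : ℂ) * I) * (p.1 - p.2) / 2)

/-- `a b c d` are the vertices of a rectangle inscribed in γ whose diagonals `ac` and
`bd` meet in the (unsigned) angle θ: common midpoint, equal-length diagonals making an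
angle of ±θ with each other, and nondegenerate. -/
noncomputable def IsInscribedThetaRect (γ : Set ℂ) (θ : ℝ) (a b c d : ℂ) : Prop :=
  a ∈ γ ∧ b ∈ γ ∧ c ∈ γ ∧ d ∈ γ ∧ a ≠ c ∧ a + c = b + d ∧
    (d - b = Complex.exp ((θ : ℂ) * I) * (c - a) ∨
     d - b = Complex.exp (-(θ : ℂ) * I) * (c - a))

theorem Rrot_eq_iff (θ : ℝ) (a b c d : ℂ) :
    Rrot θ (a, c) = (b, d) ↔ a + c = b + d ∧ d - b = exp (θ * I) * (c - a) := by
  simp only [Rrot, Prod.mk.injEq]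
  constructor
  · rintro ⟨rfl, rfl⟩
    constructor <;> ring
  · rintro ⟨hsum, hdiff⟩
    constructor
    · linear_combination hsum / 2 + hdiff / 2
    · linear_combination hsum / 2 - hdiff / 2

theorem Rrot_Rrot_neg (θ : ℝ) (p : ℂ × ℂ) : Rrot θ (Rrot (-θ) p) = p := by
  have hexp : exp (θ * I) * exp (-θ * I) = 1 := by
    rw [← Complex.exp_add, ← add_mul, add_neg_cancel, zero_mul, Complex.exp_zero]
  simp only [Rrot, Complex.ofReal_neg]
  ext
  · linear_combination (p.1 - p.2) / 2 * hexp
  · linear_combination -(p.1 - p.2) / 2 * hexp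

theorem Rrot_neg_Rrot (θ : ℝ) (p : ℂ × ℂ) : Rrot (-θ) (Rrot θ p) = p := by
  simpa only [neg_neg] using Rrot_Rrot_neg (-θ) p

theorem isInscribedThetaRect_of_mem_inter_Rrot_image {γ : Set ℂ} {θ : ℝ} {z w : ℂ}
    (hzw : (z, w) ∈ (γ ×ˢ γ) ∩ Rrot θ '' (γ ×ˢ γ)) (hne : z ≠ w) :
    IsInscribedThetaRect γ θ z (Rrot (-θ) (z, w)).1 w (Rrot (-θ) (z, w)).2 := by
  obtain ⟨⟨hz, hw⟩, ⟨p, q⟩, ⟨hp, hq⟩, hpq⟩ := hzw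
  have hinv : Rrot (-θ) (z, w) = (p, q) := by rw [← hpq, Rrot_neg_Rrot]
  obtain ⟨hsum, hdiff⟩ := (Rrot_eq_iff (-θ) z p w q).mp hinv
  rw [hinv]
  refine ⟨hz, hp, hw, hq, hne, hsum, Or.inr ?_⟩
  simpa only [Complex.ofReal_neg] using hdiff

theorem exists_ne_mem_inter_Rrot_image {γ : Set ℂ} {θ : ℝ} {a b c d : ℂ}
    (h : IsInscribedThetaRect γ θ a b c d) :
    ∃ z w : ℂ, z ≠ w ∧ (z, w) ∈ (γ ×ˢ γ) ∩ Rrot θ '' (γ ×ˢ γ) := by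
  obtain ⟨ha, hb, hc, hd, hac, hsum, hdiff | hdiff⟩ := h
  · have hbd : b ≠ d := by
      intro hbd
      rw [hbd, sub_self, eq_comm, mul_eq_zero, sub_eq_zero] at hdiff
      exact hac (hdiff.resolve_left (Complex.exp_ne_zero _)).symm
    exact ⟨b, d, hbd, ⟨hb, hd⟩, (a, c), ⟨ha, hc⟩, (Rrot_eq_iff θ a b c d).mpr ⟨hsum, hdiff⟩⟩
  · have hrot : Rrot (-θ) (a, c) = (b, d) :=
      (Rrot_eq_iff (-θ) a b c d).mpr ⟨hsum, by simpa only [Complex.ofReal_neg] using hdiff⟩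
    refine ⟨a, c, hac, ⟨ha, hc⟩, (b, d), ⟨hb, hd⟩, ?_⟩
    rw [← hrot, Rrot_Rrot_neg]

theorem stmt_3_general (γ : Set ℂ)
    (θ : ℝ) :
    (∀ z w : ℂ, (z, w) ∈ (γ ×ˢ γ) ∩ Rrot θ '' (γ ×ˢ γ) → z ≠ w →
      IsInscribedThetaRect γ θ z (Rrot (-θ) (z, w)).1 w (Rrot (-θ) (z, w)).2) ∧
    ((∃ z w : ℂ, z ≠ w ∧ (z, w) ∈ (γ ×ˢ γ) ∩ Rrot θ '' (γ ×ˢ γ)) ↔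
      ∃ a b c d : ℂ, IsInscribedThetaRect γ θ a b c d) := by
  refine ⟨fun z w hzw hne => isInscribedThetaRect_of_mem_inter_Rrot_image hzw hne, ?_⟩
  constructor
  · rintro ⟨z, w, hne, hzw⟩
    exact ⟨z, _, w, _, isInscribedThetaRect_of_mem_inter_Rrot_image hzw hne⟩
  · rintro ⟨a, b, c, d, h⟩
    exact exists_ne_mem_inter_Rrot_image h

/-- Points of (γ×γ) ∩ R_θ(γ×γ) off the diagonal exist iff γ inscribes a θ-rectangle;
explicitly, such a point (z,w) yields the inscribed θ-rectangle with vertices z, w and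
the two coordinates of R_{−θ}(z,w). -/
theorem stmt_3 (γ : Set ℂ) (f : Circle → ℂ) (hf : Continuous f)
    (hinj : Function.Injective f) (hγ : γ = Set.range f)
    (θ : ℝ) (hθ0 : 0 < θ) (hθπ : θ < Real.pi) :
    (∀ z w : ℂ, (z, w) ∈ (γ ×ˢ γ) ∩ Rrot θ '' (γ ×ˢ γ) → z ≠ w →
      IsInscribedThetaRect γ θ z (Rrot (-θ) (z, w)).1 w (Rrot (-θ) (z, w)).2) ∧
    ((∃ z w : ℂ, z ≠ w ∧ (z, w) ∈ (γ ×ˢ γ) ∩ Rrot θ '' (γ ×ˢ γ)) ↔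
      ∃ a b c d : ℂ, IsInscribedThetaRect γ θ a b c d) :=
  stmt_3_general γ θ
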